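/- For every d ≥ 1, the map r(n₁, …, n_d) = the multiset containing n₁ copies of d−1, n₂ copies of d−2, …, n_d copies of 0 is an order isomorphism between (ℕ^d, ≤_lex) and the finite multisets over {0,…,d−1} with the Dershowitz–Manna multiset ordering. -/
import Mathlib


/-- The lexicographic ordering on `d`-tuples of naturals (compared at the
first differing coordinate). -/
def natLexLe {d : ℕ} (a b : Fin d → ℕ) : Prop :=
  a = b ∨ ∃ i : Fin d, (∀ j : Fin d, j < i → a j = b j) ∧ a i < b i

/-- The Dershowitz–Manna multiset ordering on multisets over `Fin d`. -/
def dmLe {d : ℕ} (m m' : Multiset (Fin d)) : Prop :=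
  ∀ x : Fin d, m'.count x < m.count x → ∃ y : Fin d, x < y ∧ m.count y < m'.count y

/-- The map sending `(n₁, …, n_d)` to the multiset with `n₁` copies of `d-1`,
`n₂` copies of `d-2`, …, `n_d` copies of `0`. -/
def tupleToMultiset {d : ℕ} (n : Fin d → ℕ) : Multiset (Fin d) :=
  ∑ i : Fin d, Multiset.replicate (n i) i.rev

lemma count_tupleToMultiset {d : ℕ} (n : Fin d → ℕ) (x : Fin d) :
    (tupleToMultiset n).count x = n x.rev := by
  unfold tupleToMultiset
  rw [Multiset.count_sum']
  simp only [Multiset.count_replicate]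
  rw [Finset.sum_eq_single x.rev]
  · simp [Fin.rev_rev]
  · intro b _ hb
    rw [if_neg]
    intro h
    exact hb (by rw [← h, Fin.rev_rev])
  · simp

theorem lex_orderIso_multiset (d : ℕ) (hd : 1 ≤ d) :
    Function.Bijective (tupleToMultiset (d := d)) ∧
      ∀ a b : Fin d → ℕ,
        natLexLe a b ↔ dmLe (tupleToMultiset a) (tupleToMultiset b) := by
  constructor
  · constructor
    · intro a b hab
      funext i
      have := congrArg (Multiset.count i.rev) hab
      rwa [count_tupleToMultiset, count_tupleToMultiset, Fin.rev_rev] at this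
    · intro m
      refine ⟨fun i => m.count i.rev, ?_⟩
      ext x
      rw [count_tupleToMultiset, Fin.rev_rev]
  · intro a b
    simp only [dmLe, count_tupleToMultiset]
    constructor
    · rintro (rfl | ⟨i, hpre, hi⟩)
      · intro x hx; exact absurd hx (lt_irrefl _)
      · intro x hx
        refine ⟨i.rev, ?_, by simpa [Fin.rev_rev] using hi⟩
        rw [Fin.lt_rev_iff]
        by_contra h
        push_neg at h
        rcases lt_or_eq_of_le h with h' | h'
        · rw [hpre _ h'] at hx; exact absurd hx (lt_irrefl _)
        · rw [h'] at hx; omega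
    · intro hdm
      by_cases hab : a = b
      · exact Or.inl hab
      · refine Or.inr ?_
        have hne : ∃ i : Fin d, a i ≠ b i := by
          by_contra h; push_neg at h; exact hab (funext h)
        obtain ⟨i0, hne0⟩ := hne
        obtain ⟨i, hi, hmin⟩ := (Finset.univ.filter (fun i => a i ≠ b i)).exists_min_image id
          ⟨i0, by simpa using hne0⟩
        simp only [Finset.mem_filter, Finset.mem_univ, true_and] at hi
        have hpre : ∀ j : Fin d, j < i → a j = b j := by
          intro j hj
          by_contra hcon
          have := hmin j (by simpa using hcon)
          simp only [id] at this
          exact absurd (lt_of_lt_of_le hj this) (lt_irrefl _)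
        rcases lt_or_gt_of_ne hi with h | h
        · exact ⟨i, hpre, h⟩
        · obtain ⟨y, hy1, hy2⟩ := hdm i.rev (by simpa [Fin.rev_rev] using h)
          exfalso
          have hlt : y.rev < i := by
            have := (Fin.rev_lt_rev (i := y) (j := i.rev)).mpr hy1
            simpa [Fin.rev_rev] using this
          rw [hpre _ hlt] at hy2
          exact absurd hy2 (lt_irrefl _)
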